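/- The set S = { (x_1,x_2,x_3) ∈ ℤ³ : x_1 ≡ x_2 ≡ x_3 (mod 2) } of points of ℤ³ whose three coordinates are either all even or all odd is an independent exact 2-cover of the grid graph ℤ³: S is an independent set and every vertex of ℤ³ not in S has exactly two neighbours in S. -/

import Mathlib

/-- Adjacency in the grid graph `ℤ^m`: two vertices are adjacent iff they differ by `±1`
in exactly one coordinate. -/
def gridAdj (m : ℕ) (x y : Fin m → ℤ) : Prop :=
  ∃ j, (y j = x j + 1 ∨ y j = x j - 1) ∧ ∀ i, i ≠ j → y i = x i

/-- `S ⊆ ℤ^m` is an independent exact `r`-cover if `S` is an independent set in the grid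
graph `ℤ^m` and every vertex not in `S` is adjacent to exactly `r` elements of `S`. -/
def IsIndepExactCover (m r : ℕ) (S : Set (Fin m → ℤ)) : Prop :=
  (∀ x ∈ S, ∀ y ∈ S, ¬ gridAdj m x y) ∧
    ∀ x ∉ S, {y | y ∈ S ∧ gridAdj m x y}.ncard = r

/-!
A step along a grid edge changes the parity of exactly one coordinate, so it leaves the set of
points with constant parity vector as soon as there is a second coordinate. A point of `ℤ³`
outside the set has a unique coordinate `j` whose parity differs from the other two, and its
neighbours in the set are exactly `x ± e j`.
-/

open Function

def allSameParity (m : ℕ) : Set (Fin m → ℤ) :=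
  {x | (∀ i, Even (x i)) ∨ (∀ i, Odd (x i))}

lemma mem_allSameParity_iff {m : ℕ} {x : Fin m → ℤ} :
    x ∈ allSameParity m ↔ ∀ i k, (Even (x i) ↔ Even (x k)) := by
  constructor
  · rintro (h | h) i k
    · exact iff_of_true (h i) (h k)
    · exact iff_of_false (Int.not_even_iff_odd.mpr (h i)) (Int.not_even_iff_odd.mpr (h k))
  · intro h
    by_cases hall : ∀ i, Even (x i)
    · exact Or.inl hall
    · obtain ⟨i, hi⟩ := not_forall.mp hall
      exact Or.inr fun k => Int.not_even_iff_odd.mp fun hk => hi ((h i k).mpr hk)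

lemma gridAdj_iff {m : ℕ} {x y : Fin m → ℤ} :
    gridAdj m x y ↔ ∃ j, y = update x j (x j + 1) ∨ y = update x j (x j - 1) := by
  simp only [gridAdj, eq_update_iff, or_and_right]

lemma even_iff_not_even_of_eq_add_one_or_eq_sub_one {a c : ℤ} (h : c = a + 1 ∨ c = a - 1) :
    Even c ↔ ¬Even a := by
  rcases h with rfl | rfl
  exacts [Int.even_add_one, Int.even_sub_one]

lemma notMem_allSameParity_of_gridAdj {m : ℕ} (hm : 1 < m) {x y : Fin m → ℤ}
    (hx : x ∈ allSameParity m) (hxy : gridAdj m x y) : y ∉ allSameParity m := by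
  obtain ⟨j, hj, hother⟩ := hxy
  have : Nontrivial (Fin m) := Fin.nontrivial_iff_two_le.mpr hm
  obtain ⟨i, hij⟩ := exists_ne j
  rw [mem_allSameParity_iff] at hx ⊢
  intro hy
  have hij_par := hy i j
  rw [hother i hij, hx i j, even_iff_not_even_of_eq_add_one_or_eq_sub_one hj] at hij_par
  exact iff_not_self hij_par

lemma update_mem_allSameParity {m : ℕ} {x : Fin m → ℤ} {j : Fin m} {c : ℤ}
    (hj : ∀ i ≠ j, Even (x i) ↔ ¬Even (x j)) (hc : Even c ↔ ¬Even (x j)) :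
    update x j c ∈ allSameParity m := by
  have hall : ∀ i, Even (update x j c i) ↔ ¬Even (x j) := by
    intro i
    rcases eq_or_ne i j with rfl | hij
    · rwa [update_self]
    · rw [update_of_ne hij]; exact hj i hij
  rw [mem_allSameParity_iff]
  exact fun i k => (hall i).trans (hall k).symm

lemma neighbors_in_allSameParity_eq {m : ℕ} (hm : 2 < m) {x : Fin m → ℤ} {j : Fin m}
    (hj : ∀ i ≠ j, Even (x i) ↔ ¬Even (x j)) :
    {y | y ∈ allSameParity m ∧ gridAdj m x y} = {update x j (x j + 1), update x j (x j - 1)} := by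
  ext y
  simp only [Set.mem_ofPred_eq, Set.mem_insert_iff, Set.mem_singleton_iff, gridAdj_iff]
  constructor
  · rintro ⟨hy, k, hk⟩
    obtain rfl : k = j := by
      by_contra hkj
      obtain ⟨c, rfl⟩ : ∃ c, y = update x k c := hk.elim (⟨_, ·⟩) (⟨_, ·⟩)
      obtain ⟨i, hik, hij⟩ := Fin.exists_ne_and_ne_of_two_lt k j hm
      have := (mem_allSameParity_iff.mp hy) i j
      rw [update_of_ne hik, update_of_ne (Ne.symm hkj), hj i hij] at this
      exact iff_not_self this.symm
    exact hk
  · rintro (rfl | rfl)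
    · exact ⟨update_mem_allSameParity hj Int.even_add_one, j, Or.inl rfl⟩
    · exact ⟨update_mem_allSameParity hj Int.even_sub_one, j, Or.inr rfl⟩

lemma exists_parity_odd_one_out {x : Fin 3 → ℤ} (hx : x ∉ allSameParity 3) :
    ∃ j, ∀ i ≠ j, Even (x i) ↔ ¬Even (x j) := by
  have hbool : ∀ p : Fin 3 → Bool, (∃ i k, p i ≠ p k) → ∃ j, ∀ i ≠ j, p i ≠ p j := by decide
  simp only [mem_allSameParity_iff, not_forall] at hx
  obtain ⟨j, hj⟩ := hbool (fun i => decide (Even (x i))) (by simpa using hx)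
  refine ⟨j, fun i hi => ?_⟩
  have hij := hj i hi
  simp only [ne_eq, decide_eq_decide] at hij
  tauto

/-- The set of points of `ℤ³` whose three coordinates are all even or all odd is an
independent exact `2`-cover of the grid graph `ℤ³`. -/
theorem all_even_or_all_odd_cover :
    IsIndepExactCover 3 2
      {x : Fin 3 → ℤ | (∀ i, Even (x i)) ∨ (∀ i, Odd (x i))} := by
  refine ⟨fun x hx y hy hxy => notMem_allSameParity_of_gridAdj (by norm_num) hx hxy hy,
    fun x hx => ?_⟩
  obtain ⟨j, hj⟩ := exists_parity_odd_one_out hx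
  change {y | y ∈ allSameParity 3 ∧ gridAdj 3 x y}.ncard = 2
  rw [neighbors_in_allSameParity_eq (by norm_num) hj, Set.ncard_pair]
  exact (update_injective x j).ne (by omega)
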